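/- Let k₁, k₂ > 0 and t₀ ∈ ℝ. Let z : [t₀,∞) → [0, π/4) be continuous and let δ : [t₀,∞) → (−π, π) be differentiable and satisfy δ′(t) = (k₁ cos(2z(t)) / (2 N(δ(t)))) (tan(2z(t)) − 4k₂ tan(δ(t)/2)) for all t ≥ t₀, where N(δ) = √(1 + 16k₂² tan²(δ/2)). If δ(t₀) ∈ (0, π), then δ(t) ∈ [0, π) for all t ≥ t₀; that is, δ never becomes negative. (This is the forward-invariance property underlying the nonovershooting design: since y = −ρ sin δ, it guarantees that the unicycle's Cartesian ordinate satisfies y(t) ≤ 0 for all time, i.e. the curb is never violated.) -/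

import Mathlib

/-!
A function that can only increase while it is negative cannot become negative: if `f b < 0`,
take the last time `s ≤ b` with `0 ≤ f s`; then `f` is negative on `(s, b]`, hence nondecreasing
there, so `0 ≤ f s ≤ f b`. For the polar-angle dynamics, `cos (2z) ≥ 0`, `tan (2z) ≥ 0` and
`tan (δ / 2) ≤ 0` whenever `δ ≤ 0`, so the right-hand side is nonnegative wherever `δ` is negative.
-/

noncomputable section

open Real Set

/-- N(δ) = √(1 + 16k₂² tan²(δ/2)) -/
def NN (k₂ δ : ℝ) : ℝ := Real.sqrt (1 + 16 * k₂ ^ 2 * Real.tan (δ / 2) ^ 2)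

lemma NN_pos (k₂ δ : ℝ) : 0 < NN k₂ δ :=
  Real.sqrt_pos.mpr (by positivity)

lemma nonneg_of_hasDerivAt_nonneg_of_neg {f f' : ℝ → ℝ} {a b : ℝ}
    (hf : ContinuousOn f (Icc a b)) (hf' : ∀ x ∈ Ioo a b, HasDerivAt f (f' x) x)
    (hneg : ∀ x ∈ Ioo a b, f x < 0 → 0 ≤ f' x) (ha : 0 ≤ f a) (hab : a ≤ b) :
    0 ≤ f b := by
  by_contra! hb
  set S := Icc a b ∩ f ⁻¹' Ici 0
  have hS : IsCompact S :=
    isCompact_Icc.of_isClosed_subset (hf.preimage_isClosed_of_isClosed isClosed_Icc isClosed_Ici)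
      inter_subset_left
  obtain ⟨⟨has, hsb⟩, hfs⟩ : sSup S ∈ S := hS.sSup_mem ⟨a, ⟨le_rfl, hab⟩, ha⟩
  set s := sSup S
  have hneg_after : ∀ x ∈ Ioc s b, f x < 0 := fun x hx => by
    by_contra! hfx
    exact (le_csSup hS.bddAbove ⟨⟨has.trans hx.1.le, hx.2⟩, hfx⟩).not_gt hx.1
  have hs_lt : s < b := hsb.lt_of_ne fun h => hb.not_ge (h ▸ hfs)
  have hmono : MonotoneOn f (Icc s b) := by
    refine monotoneOn_of_hasDerivWithinAt_nonneg (f' := f') (convex_Icc s b)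
      (hf.mono (Icc_subset_Icc_left has)) (fun x hx => ?_) fun x hx => ?_
    all_goals rw [interior_Icc] at hx
    · exact (hf' x ⟨has.trans_lt hx.1, hx.2⟩).hasDerivWithinAt
    · exact hneg x ⟨has.trans_lt hx.1, hx.2⟩ (hneg_after x ⟨hx.1, hx.2.le⟩)
  exact hb.not_ge <| (mem_Ici.mp hfs).trans <|
    hmono ⟨le_rfl, hs_lt.le⟩ ⟨hs_lt.le, le_rfl⟩ hs_lt.le

lemma polarAngle_rhs_nonneg_of_nonpos {k₁ k₂ z δ : ℝ} (hk₁ : 0 ≤ k₁) (hk₂ : 0 ≤ k₂)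
    (hz : z ∈ Icc 0 (π / 4)) (hδ : δ ∈ Icc (-π) 0) :
    0 ≤ (k₁ * cos (2 * z) / (2 * NN k₂ δ)) * (tan (2 * z) - 4 * k₂ * tan (δ / 2)) := by
  have hcos : 0 ≤ cos (2 * z) :=
    cos_nonneg_of_mem_Icc ⟨by linarith [pi_pos, hz.1], by linarith [hz.2]⟩
  have htan_z : 0 ≤ tan (2 * z) :=
    tan_nonneg_of_nonneg_of_le_pi_div_two (by linarith [hz.1]) (by linarith [hz.2])
  have htan_δ : tan (δ / 2) ≤ 0 :=
    tan_nonpos_of_nonpos_of_neg_pi_div_two_le (by linarith [hδ.2]) (by linarith [hδ.1])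
  have hN := NN_pos k₂ δ
  exact mul_nonneg (by positivity) (by nlinarith)

theorem nonovershooting_delta_invariance_general
    (k₁ k₂ : ℝ) (hk₁ : 0 < k₁) (hk₂ : 0 < k₂) (t₀ : ℝ)
    (z δ : ℝ → ℝ)
    (hzrange : ∀ t : ℝ, t₀ ≤ t → z t ∈ Set.Ico 0 (Real.pi / 4))
    (hδrange : ∀ t : ℝ, t₀ ≤ t → δ t ∈ Set.Ioo (-Real.pi) Real.pi)
    (hδ : ∀ t : ℝ, t₀ ≤ t →
      HasDerivAt δ
        ((k₁ * Real.cos (2 * z t) / (2 * NN k₂ (δ t)))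
          * (Real.tan (2 * z t) - 4 * k₂ * Real.tan (δ t / 2))) t)
    (h₀ : δ t₀ ∈ Set.Ioo 0 Real.pi) :
    ∀ t : ℝ, t₀ ≤ t → δ t ∈ Set.Ico 0 Real.pi := by
  intro t ht
  refine ⟨nonneg_of_hasDerivAt_nonneg_of_neg
    (fun x hx => (hδ x hx.1).continuousAt.continuousWithinAt)
    (fun x hx => hδ x hx.1.le) (fun x hx hneg => ?_) h₀.1.le ht, (hδrange t ht).2⟩
  exact polarAngle_rhs_nonneg_of_nonpos hk₁.le hk₂.le (Ico_subset_Icc_self (hzrange x hx.1.le))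
    ⟨(hδrange x hx.1.le).1.le, hneg.le⟩

theorem nonovershooting_delta_invariance
    (k₁ k₂ : ℝ) (hk₁ : 0 < k₁) (hk₂ : 0 < k₂) (t₀ : ℝ)
    (z δ : ℝ → ℝ)
    (hzc : ContinuousOn z (Set.Ici t₀))
    (hzrange : ∀ t : ℝ, t₀ ≤ t → z t ∈ Set.Ico 0 (Real.pi / 4))
    (hδrange : ∀ t : ℝ, t₀ ≤ t → δ t ∈ Set.Ioo (-Real.pi) Real.pi)
    (hδ : ∀ t : ℝ, t₀ ≤ t →
      HasDerivAt δ
        ((k₁ * Real.cos (2 * z t) / (2 * NN k₂ (δ t)))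
          * (Real.tan (2 * z t) - 4 * k₂ * Real.tan (δ t / 2))) t)
    (h₀ : δ t₀ ∈ Set.Ioo 0 Real.pi) :
    ∀ t : ℝ, t₀ ≤ t → δ t ∈ Set.Ico 0 Real.pi :=
  nonovershooting_delta_invariance_general k₁ k₂ hk₁ hk₂ t₀ z δ hzrange hδrange hδ h₀

end
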